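/- Let N be a group, let G be an abelian group, and let φ : G → Aut(N) be an action of G on N by automorphisms. In the semidirect product Γ = N ⋊_φ G, the normalizer of the canonical subgroup {1} ⋊ G (the image of the inclusion G → Γ) consists exactly of the elements (n, g) with φ(h)(n) = n for all h ∈ G; consequently this normalizer is isomorphic, as a group, to the direct product N^G × G, where N^G = {n ∈ N : φ(h)(n) = n for all h ∈ G} is the subgroup of G-fixed points. -/

import Mathlib

/-- The subgroup of `G`-fixed points of `N` under an action `φ : G →* MulAut N`. -/
def fixedSubgroup {N G : Type*} [Group N] [Group G] (φ : G →* MulAut N) : Subgroup N where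
  carrier := {n : N | ∀ h : G, φ h n = n}
  one_mem' := fun h => map_one (φ h)
  mul_mem' := by
    intro a b ha hb h
    rw [map_mul, ha h, hb h]
  inv_mem' := by
    intro a ha h
    rw [map_inv, ha h]

/-!
Write `x = (n, g)`. Since `G` is abelian, conjugating `(m, h)` by `x` gives an element with
`N`-component `n · φ(g)(m) · φ(h)(n)⁻¹`. For `m = 1` this is trivial for every `h` exactly when
`n` is `G`-fixed; conversely, when `n` is fixed the component becomes `n · φ(g)(m) · n⁻¹`,
which is trivial exactly when `m` is. On the normalizer the product is then
`(n, g)(n', g') = (n n', g g')`, since `φ(g)` fixes `n'`.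
-/

namespace SemidirectProduct

variable {N G : Type*} [Group N]

theorem mem_range_inr_iff [Group G] {φ : G →* MulAut N} {x : N ⋊[φ] G} :
    x ∈ (inr : G →* N ⋊[φ] G).range ↔ x.left = 1 :=
  ⟨by rintro ⟨g, rfl⟩; rfl, fun h => ⟨x.right, by ext <;> simp [h]⟩⟩

variable [CommGroup G] {φ : G →* MulAut N}

theorem conj_left (x y : N ⋊[φ] G) :
    (x * y * x⁻¹).left = x.left * φ x.right y.left * φ y.right x.left⁻¹ := by
  have hcancel : φ (x * y).right (φ x.right⁻¹ x.left⁻¹) = φ y.right x.left⁻¹ := by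
    rw [mul_right, ← MulAut.mul_apply, ← map_mul, mul_comm x.right, mul_inv_cancel_right]
  rw [mul_left, inv_left, hcancel, mul_left]

theorem mem_normalizer_range_inr_iff (x : N ⋊[φ] G) :
    x ∈ Subgroup.normalizer ((inr : G →* N ⋊[φ] G).range : Set (N ⋊[φ] G)) ↔
      x.left ∈ fixedSubgroup φ := by
  rw [Subgroup.mem_normalizer_iff]
  constructor
  · intro hx h
    have hconj := mem_range_inr_iff.mp ((hx (inr h)).mp ⟨h, rfl⟩)
    rw [conj_left, left_inr, right_inr, map_one, mul_one] at hconj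
    rw [mul_eq_one_iff_eq_inv, map_inv, inv_inv] at hconj
    exact hconj.symm
  · intro hx y
    have hfix : φ y.right x.left⁻¹ = x.left⁻¹ := by rw [map_inv, hx]
    rw [mem_range_inr_iff, mem_range_inr_iff, conj_left, hfix, conj_eq_one_iff,
      map_eq_one_iff _ (φ x.right).injective]

theorem left_mul_of_mem_normalizer_range_inr {x y : N ⋊[φ] G}
    (hy : y ∈ Subgroup.normalizer ((inr : G →* N ⋊[φ] G).range : Set (N ⋊[φ] G))) :
    (x * y).left = x.left * y.left := by
  rw [mul_left, (mem_normalizer_range_inr_iff y).mp hy x.right]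

variable (φ) in
def normalizerRangeInrEquiv :
    Subgroup.normalizer ((inr : G →* N ⋊[φ] G).range : Set (N ⋊[φ] G)) ≃*
      fixedSubgroup φ × G where
  toFun x := (⟨x.1.left, (mem_normalizer_range_inr_iff x.1).mp x.2⟩, x.1.right)
  invFun p := ⟨⟨p.1, p.2⟩, (mem_normalizer_range_inr_iff _).mpr p.1.2⟩
  left_inv _ := rfl
  right_inv _ := rfl
  map_mul' x y := by
    ext
    · exact left_mul_of_mem_normalizer_range_inr y.2
    · rfl

end SemidirectProduct

/-- For `G` abelian acting on `N` via `φ`, the normalizer of the canonical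
subgroup `{1} ⋊ G` of `N ⋊[φ] G` consists exactly of the elements `(n, g)` with
`φ h n = n` for all `h : G`, and this normalizer is isomorphic to `N^G × G`. -/
theorem stmt1 {N G : Type*} [Group N] [CommGroup G] (φ : G →* MulAut N) :
    (∀ x : N ⋊[φ] G,
      x ∈ Subgroup.normalizer ((SemidirectProduct.inr : G →* N ⋊[φ] G).range : Set (N ⋊[φ] G)) ↔
        ∀ h : G, φ h x.left = x.left) ∧
    Nonempty
      (((Subgroup.normalizer ((SemidirectProduct.inr : G →* N ⋊[φ] G).range : Set (N ⋊[φ] G)) : Subgroup (N ⋊[φ] G))) ≃*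
        (fixedSubgroup φ × G)) :=
  ⟨SemidirectProduct.mem_normalizer_range_inr_iff,
    ⟨SemidirectProduct.normalizerRangeInrEquiv φ⟩⟩
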